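/- For every integer i ≥ 1, the series ∑_{N=i}^{∞} η_N^i converges, and its sum equals 1 + 1/H. -/

import Mathlib

/-!
With `q_N = ∏_{j=i+1}^N (1 - η_j)` one has `q_{N+1} (H + N + 1) = q_N N`, so
`H q_N = q_N (H + N) - q_{N+1} (H + N + 1)` and `∑_{N ≥ i} q_N` telescopes to `(H + i) / H`,
provided `q_N (H + N) → 0`. That limit holds because `q_N (H + N) N` is nonincreasing
for `H ≥ 1`.
Multiplying by `η_i = (H + 1)/(H + i)` gives `(H + 1)/H`.
-/

/-- Learning rate `η_j = (H+1)/(H+j)` and weights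
`η_N^0 = ∏_{j=1}^N (1-η_j)`, `η_N^i = η_i · ∏_{j=i+1}^N (1-η_j)` (1 ≤ i ≤ N)
of the UCB-H/OPIQ Q-learning update. -/
noncomputable def etaWeight (H N i : ℕ) : ℝ :=
  (if i = 0 then 1 else ((H : ℝ) + 1) / ((H : ℝ) + i)) *
    ∏ j ∈ Finset.Icc (i + 1) N, (1 - ((H : ℝ) + 1) / ((H : ℝ) + j))

open Filter Topology Finset

theorem Antitone.hasSum_sub_succ {f : ℕ → ℝ} (hf : Antitone f) {l : ℝ}
    (hl : Tendsto f atTop (𝓝 l)) : HasSum (fun n ↦ f n - f (n + 1)) (f 0 - l) := by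
  refine (hasSum_iff_tendsto_nat_of_nonneg (fun n ↦ sub_nonneg.2 (hf n.le_succ)) _).2 ?_
  simp_rw [sum_range_sub']
  exact tendsto_const_nhds.sub hl

noncomputable def learningRate (h : ℝ) (j : ℕ) : ℝ := (h + 1) / (h + j)

noncomputable def learningRateProd (h : ℝ) (i N : ℕ) : ℝ :=
  ∏ j ∈ Icc (i + 1) N, (1 - learningRate h j)

theorem etaWeight_eq_learningRate_mul {H i : ℕ} (hi : i ≠ 0) (N : ℕ) :
    etaWeight H N i = learningRate H i * learningRateProd H i N := by
  rw [etaWeight, if_neg hi]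
  rfl

namespace learningRateProd

variable {h : ℝ} {i N : ℕ}

@[simp]
theorem self : learningRateProd h i i = 1 := by
  simp [learningRateProd]

theorem nonneg (hh : 0 ≤ h) : 0 ≤ learningRateProd h i N := by
  refine prod_nonneg fun j hj ↦ sub_nonneg.2 ?_
  have hj : (1 : ℝ) ≤ j := by exact_mod_cast (Nat.le_add_left 1 i).trans (mem_Icc.1 hj).1
  exact div_le_one_of_le₀ (by linarith) (by linarith)

theorem succ_mul (hh : 0 ≤ h) (hiN : i ≤ N) :
    learningRateProd h i (N + 1) * (h + (N + 1 : ℕ)) = learningRateProd h i N * N := by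
  have hpos : h + (N + 1 : ℕ) ≠ 0 := by positivity
  rw [learningRateProd, prod_Icc_succ_top (by omega), mul_assoc, ← learningRateProd,
    learningRate, sub_mul, div_mul_cancel₀ _ hpos]
  push_cast
  ring

theorem mul_eq_sub (hh : 0 ≤ h) (hiN : i ≤ N) :
    h * learningRateProd h i N =
      learningRateProd h i N * (h + N) - learningRateProd h i (N + 1) * (h + (N + 1 : ℕ)) := by
  rw [succ_mul hh hiN]
  ring

theorem tendsto_mul_add_nhds_zero (hh : 1 ≤ h) :
    Tendsto (fun n ↦ learningRateProd h i (i + n) * (h + (i + n : ℕ))) atTop (𝓝 0) := by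
  set r : ℕ → ℝ := fun n ↦ learningRateProd h i (i + n) * (h + (i + n : ℕ))
  have hr : ∀ n, 0 ≤ r n := fun n ↦ mul_nonneg (nonneg (by linarith)) (by positivity)
  have hanti : Antitone fun n : ℕ ↦ r n * (i + n : ℕ) := by
    refine antitone_nat_of_succ_le fun n ↦ ?_
    have hstep := succ_mul (h := h) (by linarith) (Nat.le_add_right i n)
    simp only [r, ← add_assoc, hstep]
    have : (0 : ℝ) ≤ learningRateProd h i (i + n) * (i + n : ℕ) :=
      mul_nonneg (nonneg (by linarith)) (Nat.cast_nonneg _)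
    push_cast at this ⊢
    nlinarith
  refine squeeze_zero' (Eventually.of_forall hr) ?_
    (tendsto_const_div_atTop_nhds_zero_nat (r 0 * i))
  filter_upwards [eventually_gt_atTop 0] with n hn
  rw [le_div_iff₀ (by exact_mod_cast hn)]
  calc r n * n ≤ r n * (i + n : ℕ) :=
        mul_le_mul_of_nonneg_left (by push_cast; linarith) (hr n)
    _ ≤ r 0 * i := by simpa using hanti (Nat.zero_le n)

theorem hasSum (hh : 1 ≤ h) :
    HasSum (fun n ↦ learningRateProd h i (i + n)) ((h + i) / h) := by
  have hsub : ∀ n, h * learningRateProd h i (i + n) =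
      learningRateProd h i (i + n) * (h + (i + n : ℕ)) -
        learningRateProd h i (i + (n + 1)) * (h + (i + (n + 1) : ℕ)) :=
    fun n ↦ mul_eq_sub (by linarith) (Nat.le_add_right i n)
  have hanti : Antitone fun n ↦ learningRateProd h i (i + n) * (h + (i + n : ℕ)) :=
    antitone_nat_of_succ_le fun n ↦ by
      have := mul_nonneg (by linarith : 0 ≤ h) (nonneg (i := i) (N := i + n) (by linarith))
      linarith [hsub n]
  have htele := hanti.hasSum_sub_succ (tendsto_mul_add_nhds_zero hh)
  simp only [← hsub, add_zero, self, one_mul, sub_zero] at htele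
  rw [← hasSum_mul_left_iff (by positivity : h ≠ 0), mul_div_cancel₀ _ (by positivity)]
  exact htele

end learningRateProd

/-- Lemma 1(c): for every `i ≥ 1`, the series `∑_{N=i}^∞ η_N^i` converges
with sum `1 + 1/H` (the sum is indexed as `N = i + n`, `n = 0, 1, 2, …`). -/
theorem etaWeight_hasSum (H : ℕ) (hH : 1 ≤ H) (i : ℕ) (hi : 1 ≤ i) :
    HasSum (fun n : ℕ => etaWeight H (i + n) i) (1 + 1 / (H : ℝ)) := by
  have hH' : (1 : ℝ) ≤ H := by exact_mod_cast hH
  simp_rw [etaWeight_eq_learningRate_mul (Nat.one_le_iff_ne_zero.1 hi)]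
  have hval : learningRate H i * ((H + i) / H) = 1 + 1 / (H : ℝ) := by
    have : (H : ℝ) + i ≠ 0 := by positivity
    unfold learningRate
    field_simp
  rw [← hval]
  exact (learningRateProd.hasSum hH').mul_left _
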